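/- arXiv:1409.8605 — 2 statements merged into one kernel-verified Lean document; each statement's English description precedes it below -/
import Mathlib

section
/- For the logarithmic mean θ(s,t) = ∫₀¹ s^{1-p} t^p dp, for all s,t,u,v > 0 one has u·∂₁θ(s,t) + v·∂₂θ(s,t) ≥ θ(u,v). -/
/-- The logarithmic mean `θ(s,t) = ∫₀¹ s^(1-p) t^p dp`. -/
noncomputable def logMean (s t : ℝ) : ℝ := ∫ p in (0:ℝ)..1, s ^ (1 - p) * t ^ p

/-- Partial derivative of the logarithmic mean in the first argument. -/
noncomputable def logMean₁ (s t : ℝ) : ℝ := deriv (fun u => logMean u t) s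

/-- Partial derivative of the logarithmic mean in the second argument. -/
noncomputable def logMean₂ (s t : ℝ) : ℝ := deriv (fun v => logMean s v) t

/-!
Differentiating under the integral sign gives `∂₁θ(s,t) = ∫₀¹ (1-p) r^p dp` and, by the symmetry
`θ(s,t) = θ(t,s)` and `p ↦ 1-p`, `∂₂θ(s,t) = ∫₀¹ p r^(p-1) dp`, where `r = t/s`. Weighted AM-GM
with weights `1-p, p` applied to `u r^p` and `v r^(p-1)` bounds the integrand `u^(1-p) v^p` of
`θ(u,v)` pointwise, because the powers of `r` cancel.
-/

open Set intervalIntegral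

lemma intervalIntegral.integral_zero_one_comp_one_sub {E : Type*} [NormedAddCommGroup E]
    [NormedSpace ℝ E] (f : ℝ → E) :
    ∫ p in (0:ℝ)..1, f (1 - p) = ∫ p in (0:ℝ)..1, f p := by
  simp [integral_comp_sub_left f 1 (a := 0) (b := 1)]

lemma Real.rpow_le_one_add {y p : ℝ} (hy : 0 ≤ y) (hp₀ : 0 ≤ p) (hp₁ : p ≤ 1) :
    y ^ p ≤ 1 + y := by
  have := Real.geom_mean_le_arith_mean2_weighted (sub_nonneg.2 hp₁) hp₀ zero_le_one hy
    (sub_add_cancel 1 p)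
  rw [Real.one_rpow, one_mul] at this
  nlinarith

lemma logMean_comm (s t : ℝ) : logMean s t = logMean t s := by
  rw [logMean, ← integral_zero_one_comp_one_sub]
  simp only [sub_sub_cancel, mul_comm, logMean]

lemma hasDerivAt_rpow_one_sub_mul_rpow {x t : ℝ} (p : ℝ) (hx : 0 < x) (ht : 0 ≤ t) :
    HasDerivAt (fun y => y ^ (1 - p) * t ^ p) ((1 - p) * (t / x) ^ p) x := by
  refine ((Real.hasDerivAt_rpow_const (p := 1 - p) (Or.inl hx.ne')).mul_const (t ^ p)).congr_deriv
    ?_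
  rw [sub_sub_cancel_left, Real.rpow_neg hx.le, Real.div_rpow ht hx.le]
  ring

lemma hasDerivAt_logMean_left {s t : ℝ} (hs : 0 < s) (ht : 0 < t) :
    HasDerivAt (fun x => logMean x t) (∫ p in (0:ℝ)..1, (1 - p) * (t / s) ^ p) s := by
  have hcont : ∀ x, 0 < x → Continuous fun p : ℝ => x ^ (1 - p) * t ^ p := fun x hx => by
    fun_prop (disch := positivity)
  refine (hasDerivAt_integral_of_dominated_loc_of_deriv_le
    (F := fun x p => x ^ (1 - p) * t ^ p) (F' := fun x p => (1 - p) * (t / x) ^ p)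
    (bound := fun _ => 1 + 2 * t / s) (Ioi_mem_nhds (half_lt_self hs))
    ?_ ((hcont s hs).intervalIntegrable 0 1) ?_ ?_
    intervalIntegrable_const ?_).2
  · filter_upwards [Ioi_mem_nhds hs] with x hx
    exact (hcont x hx).aestronglyMeasurable
  · exact (by fun_prop (disch := positivity) :
      Continuous fun p : ℝ => (1 - p) * (t / s) ^ p).aestronglyMeasurable
  · refine Filter.Eventually.of_forall fun p hp x (hx : s / 2 < x) => ?_
    rw [uIoc_of_le zero_le_one] at hp
    have hx₀ : 0 < x := (half_pos hs).trans hx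
    rw [norm_mul, Real.norm_of_nonneg (sub_nonneg.2 hp.2), Real.norm_of_nonneg (by positivity)]
    calc (1 - p) * (t / x) ^ p ≤ 1 * (1 + t / x) := by
          gcongr
          · linarith [hp.1]
          · exact Real.rpow_le_one_add (by positivity) hp.1.le hp.2
      _ ≤ 1 + t / (s / 2) := by rw [one_mul]; gcongr
      _ = 1 + 2 * t / s := by field_simp
  · exact Filter.Eventually.of_forall fun p _ x hx =>
      hasDerivAt_rpow_one_sub_mul_rpow p (lt_trans (half_pos hs) hx) ht.le

lemma logMean₁_eq {s t : ℝ} (hs : 0 < s) (ht : 0 < t) :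
    logMean₁ s t = ∫ p in (0:ℝ)..1, (1 - p) * (t / s) ^ p :=
  (hasDerivAt_logMean_left hs ht).deriv

lemma logMean₂_eq_logMean₁ (s t : ℝ) : logMean₂ s t = logMean₁ t s := by
  simp only [logMean₂, logMean₁, logMean_comm s]

lemma logMean₂_eq {s t : ℝ} (hs : 0 < s) (ht : 0 < t) :
    logMean₂ s t = ∫ p in (0:ℝ)..1, p * (t / s) ^ (p - 1) := by
  rw [logMean₂_eq_logMean₁, logMean₁_eq ht hs, ← integral_zero_one_comp_one_sub]
  congr 1 with p
  have hr : 0 ≤ t / s := (div_pos ht hs).le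
  rw [sub_sub_cancel, ← inv_div, Real.inv_rpow hr, ← Real.rpow_neg hr, neg_sub]

lemma rpow_one_sub_mul_rpow_le {u v r p : ℝ} (hu : 0 ≤ u) (hv : 0 ≤ v) (hr : 0 < r)
    (hp₀ : 0 ≤ p) (hp₁ : p ≤ 1) :
    u ^ (1 - p) * v ^ p ≤ u * ((1 - p) * r ^ p) + v * (p * r ^ (p - 1)) := by
  have hr_cancel : (u * r ^ p) ^ (1 - p) * (v * r ^ (p - 1)) ^ p = u ^ (1 - p) * v ^ p := by
    rw [Real.mul_rpow hu (by positivity), Real.mul_rpow hv (by positivity),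
      ← Real.rpow_mul hr.le, ← Real.rpow_mul hr.le, mul_mul_mul_comm, ← Real.rpow_add hr,
      show p * (1 - p) + (p - 1) * p = 0 by ring, Real.rpow_zero, mul_one]
  calc u ^ (1 - p) * v ^ p = (u * r ^ p) ^ (1 - p) * (v * r ^ (p - 1)) ^ p := hr_cancel.symm
    _ ≤ (1 - p) * (u * r ^ p) + p * (v * r ^ (p - 1)) :=
      Real.geom_mean_le_arith_mean2_weighted (sub_nonneg.2 hp₁) hp₀ (by positivity)
        (by positivity) (sub_add_cancel 1 p)
    _ = u * ((1 - p) * r ^ p) + v * (p * r ^ (p - 1)) := by ring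

theorem logMean_four_point (s t u v : ℝ) (hs : 0 < s) (ht : 0 < t) (hu : 0 < u) (hv : 0 < v) :
    u * logMean₁ s t + v * logMean₂ s t ≥ logMean u v := by
  have hr : 0 < t / s := div_pos ht hs
  rw [logMean₁_eq hs ht, logMean₂_eq hs ht, ← integral_const_mul,
    ← integral_const_mul, ← integral_add, ge_iff_le, logMean]
  refine integral_mono_on zero_le_one ?_ ?_ fun p hp =>
    rpow_one_sub_mul_rpow_le hu.le hv.le hr hp.1 hp.2
  all_goals exact Continuous.intervalIntegrable (by fun_prop (disch := positivity)) 0 1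
end

section
/- In the Bernoulli–Laplace graph Ω(n,k), for any pair of distinct adjacent edges e = {x, s_{ij}x}, e' = {x, s_{pq}x} sharing the vertex x: if i = p or j = q then e and e' lie in a unique common triangle, and no 4-cycle contains both e and e'. -/
/-- Adjacency in the Bernoulli–Laplace graph on `Ω(n,k)`: Hamming distance 2. -/
def blAdj {n : ℕ} (x y : Finset (Fin n)) : Prop := (symmDiff x y).card = 2

/-- `s_{ij} x`: move the particle from the occupied site `i` to the empty site `j`. -/
def blS {n : ℕ} (i j : Fin n) (x : Finset (Fin n)) : Finset (Fin n) := insert j (x.erase i)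

/-- A 4-cycle on the four distinct vertices `a, b, c, d` (in this cyclic order),
without chords. -/
def blC4 {n : ℕ} (a b c d : Finset (Fin n)) : Prop :=
  a ≠ b ∧ a ≠ c ∧ a ≠ d ∧ b ≠ c ∧ b ≠ d ∧ c ≠ d ∧
    blAdj a b ∧ blAdj b c ∧ blAdj c d ∧ blAdj d a ∧ ¬ blAdj a c ∧ ¬ blAdj b d

lemma mem_blS {n : ℕ} {x : Finset (Fin n)} {i j a : Fin n} :
    a ∈ blS i j x ↔ a = j ∨ (a ≠ i ∧ a ∈ x) := by
  simp [blS, Finset.mem_insert, Finset.mem_erase]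

lemma blAdj_comm {n : ℕ} {x y : Finset (Fin n)} : blAdj x y ↔ blAdj y x := by
  unfold blAdj; rw [symmDiff_comm]

lemma sd_x_blS {n : ℕ} {x : Finset (Fin n)} {i j : Fin n} (hi : i ∈ x) (hj : j ∉ x) :
    symmDiff x (blS i j x) = {i, j} := by
  ext a
  simp only [Finset.mem_symmDiff, mem_blS, Finset.mem_insert, Finset.mem_singleton]
  by_cases h1 : a = i <;> by_cases h2 : a = j <;> simp_all

lemma blAdj_x_blS {n : ℕ} {x : Finset (Fin n)} {i j : Fin n} (hi : i ∈ x) (hj : j ∉ x) :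
    blAdj x (blS i j x) := by
  have hij : i ≠ j := fun h => hj (h ▸ hi)
  unfold blAdj
  rw [sd_x_blS hi hj, Finset.card_pair hij]

lemma sd_blS_same_i {n : ℕ} {x : Finset (Fin n)} {i j q : Fin n}
    (hj : j ∉ x) (hq : q ∉ x) (hjq : j ≠ q) :
    symmDiff (blS i j x) (blS i q x) = {j, q} := by
  ext a
  simp only [Finset.mem_symmDiff, mem_blS, Finset.mem_insert, Finset.mem_singleton]
  by_cases h1 : a = j <;> by_cases h2 : a = q <;> by_cases h3 : a = i <;> simp_all

lemma sd_blS_same_j {n : ℕ} {x : Finset (Fin n)} {i j p : Fin n}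
    (hi : i ∈ x) (hp : p ∈ x) (hj : j ∉ x) (hip : i ≠ p) :
    symmDiff (blS i j x) (blS p j x) = {i, p} := by
  ext a
  simp only [Finset.mem_symmDiff, mem_blS, Finset.mem_insert, Finset.mem_singleton]
  by_cases h1 : a = i <;> by_cases h2 : a = p <;> by_cases h3 : a = j <;> simp_all

/-- Overlapping pairs of adjacent edges (`i = p` or `j = q`) in the Bernoulli–Laplace
graph lie in a unique common triangle, and in no 4-cycle. -/
theorem bernoulliLaplace_overlap_triangle (n k : ℕ) (hn : 1 < n) (hk1 : 1 ≤ k)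
    (hk2 : k ≤ n - 1) (x : Finset (Fin n)) (hx : x.card = k) (i j p q : Fin n)
    (hi : i ∈ x) (hp : p ∈ x) (hj : j ∉ x) (hq : q ∉ x)
    (hover : i = p ∨ j = q) (hne : ¬ (i = p ∧ j = q)) :
    (∃! t : Finset (Finset (Fin n)), t.card = 3 ∧ x ∈ t ∧ blS i j x ∈ t ∧
        blS p q x ∈ t ∧ ∀ u ∈ t, ∀ v ∈ t, u ≠ v → blAdj u v) ∧
    ¬ ∃ z : Finset (Fin n), z.card = k ∧ blC4 x (blS i j x) z (blS p q x) := by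
  set A := blS i j x with hA
  set B := blS p q x with hB
  -- basic distinctness facts
  have hxA : x ≠ A := by
    intro h; apply hj; rw [h]; exact mem_blS.2 (Or.inl rfl)
  have hxB : x ≠ B := by
    intro h; apply hq; rw [h]; exact mem_blS.2 (Or.inl rfl)
  have hAB : A ≠ B := by
    rcases hover with hip | hjq
    · -- i = p, so j ≠ q; q ∈ B but q ∉ A
      have hjq : j ≠ q := fun h => hne ⟨hip, h⟩
      intro h
      have : q ∈ A := h ▸ (mem_blS.2 (Or.inl rfl))
      rcases mem_blS.1 this with h' | ⟨_, h'⟩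
      · exact hjq h'.symm
      · exact hq h'
    · -- j = q, so i ≠ p; p ∈ A but p ∉ B
      have hip : i ≠ p := fun h => hne ⟨h, hjq⟩
      have hpj : p ≠ j := fun h => hj (h ▸ hp)
      intro h
      have : p ∈ B := h ▸ (mem_blS.2 (Or.inr ⟨Ne.symm hip, hp⟩))
      rcases mem_blS.1 this with h' | ⟨h', _⟩
      · exact hj (hjq ▸ (h' ▸ hp))
      · exact h' rfl
  -- adjacencies
  have hadjxA : blAdj x A := blAdj_x_blS hi hj
  have hadjxB : blAdj x B := blAdj_x_blS hp hq
  have hadjAB : blAdj A B := by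
    rcases hover with hip | hjq
    · have hjq : j ≠ q := fun h => hne ⟨hip, h⟩
      unfold blAdj
      rw [hA, hB, ← hip, sd_blS_same_i hj hq hjq, Finset.card_pair hjq]
    · have hip : i ≠ p := fun h => hne ⟨h, hjq⟩
      unfold blAdj
      rw [hA, hB, ← hjq, sd_blS_same_j hi hp hj hip, Finset.card_pair hip]
  constructor
  · refine ⟨{x, A, B}, ⟨?_, ?_, ?_, ?_, ?_⟩, ?_⟩
    · rw [Finset.card_insert_of_notMem (by simp [hxA, hxB]),
        Finset.card_insert_of_notMem (by simp [hAB]), Finset.card_singleton]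
    · simp
    · simp
    · simp
    · intro u hu v hv huv
      simp only [Finset.mem_insert, Finset.mem_singleton] at hu hv
      rcases hu with rfl | rfl | rfl <;> rcases hv with rfl | rfl | rfl <;>
        first
          | exact absurd rfl huv
          | assumption
          | (rw [blAdj_comm]; assumption)
    · rintro t ⟨hc, hxt, hAt, hBt, -⟩
      have hsub : ({x, A, B} : Finset (Finset (Fin n))) ⊆ t := by
        intro u hu
        simp only [Finset.mem_insert, Finset.mem_singleton] at hu
        rcases hu with rfl | rfl | rfl <;> assumption
      have hcard : ({x, A, B} : Finset (Finset (Fin n))).card = 3 := by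
        rw [Finset.card_insert_of_notMem (by simp [hxA, hxB]),
          Finset.card_insert_of_notMem (by simp [hAB]), Finset.card_singleton]
      exact (Finset.eq_of_subset_of_card_le hsub (by rw [hc, hcard])).symm
  · rintro ⟨z, -, hc4⟩
    exact hc4.2.2.2.2.2.2.2.2.2.2.2 hadjAB
end
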